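/- arXiv:2306.10154 — 2 statements merged into one kernel-verified Lean document; each statement's English description precedes it below -/
import Mathlib

section
/- For every integer k ≥ 1, let g_k = p^A(2k|1 / 1|2k), a Frobenius type-A seaweed. Then the spectrum of g_k is the multiset ⋃_{i=1}^{k} { (−k+i) with multiplicity 4i−2, (k−i+1) with multiplicity 4i−2 }. Moreover, g_k has the log-concave spectrum property. -/
namespace Seaweed

/-- Positions `i` and `j` (1-indexed) are joined by an arc of the composition `c`:
they lie in the same block of `c` and are placed symmetrically within it. -/
def blockPair (c : List ℕ) (i j : ℕ) : Prop :=
  ∃ k, k < c.length ∧ (c.take k).sum < i ∧ (c.take k).sum < j ∧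
    i + j = 2 * (c.take k).sum + c.getD k 0 + 1 ∧ i ≠ j

lemma blockPair_symm {c : List ℕ} {i j : ℕ} (h : blockPair c i j) : blockPair c j i := by
  obtain ⟨k, hk, hi, hj, hsum, hne⟩ := h
  exact ⟨k, hk, hj, hi, by omega, hne.symm⟩

/-- The meander `M(a|b)` of the pair of compositions `(a, b)`, as a simple graph on `ℕ`
(positions `1, …, a.sum` carry the meander; all other naturals are isolated).
Top edges come from `a`, bottom edges from `b`. -/
def meander (a b : List ℕ) : SimpleGraph ℕ where
  Adj i j := blockPair a i j ∨ blockPair b i j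
  symm := ⟨fun _ _ h => h.imp blockPair_symm blockPair_symm⟩
  loopless := ⟨by
    rintro i (⟨k, _, _, _, _, hne⟩ | ⟨k, _, _, _, _, hne⟩) <;> exact hne rfl⟩

/-- The directed-edge relation of the oriented meander: top edges are oriented
right-to-left, bottom edges left-to-right. -/
def dirEdge (a b : List ℕ) (x y : ℕ) : Prop :=
  (blockPair a x y ∧ y < x) ∨ (blockPair b x y ∧ x < y)

open scoped Classical in
/-- The weight of a walk in the oriented meander: each step taken in agreement with
the orientation counts `+1`, each step against it counts `-1`. -/
noncomputable def walkWeight (a b : List ℕ) {i j : ℕ} (w : (meander a b).Walk i j) : ℤ :=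
  (w.darts.map fun d => if dirEdge a b d.toProd.1 d.toProd.2 then (1 : ℤ) else -1).sum

open scoped Classical in
/-- `w(P_{i,j}(a|b))`: the weight of the (unique, when the meander consists of a single
path) path from `v_i` to `v_j` in the oriented meander. -/
noncomputable def pathWeight (a b : List ℕ) (i j : ℕ) : ℤ :=
  if h : ∃ p : (meander a b).Walk i j, p.IsPath then walkWeight a b h.choose else 0

/-- The meander of `(a, b)` consists of a single path: it has no cycles (in particular no
doubled top/bottom edge, which would be a 2-cycle) and all positions `1, …, n` are
connected.  This is exactly the condition for `p^A(a|b)` to be Frobenius. -/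
def IsSinglePath (a b : List ℕ) : Prop :=
  (meander a b).IsAcyclic ∧
  (∀ i j, i ∈ Finset.Icc 1 a.sum → j ∈ Finset.Icc 1 a.sum → (meander a b).Reachable i j) ∧
  ∀ i j, ¬(blockPair a i j ∧ blockPair b i j)

/-- `i` and `j` lie in the same block of the composition `c`. -/
def sameBlock (c : List ℕ) (i j : ℕ) : Prop :=
  ∃ k, k < c.length ∧ (c.take k).sum < i ∧ i ≤ (c.take k).sum + c.getD k 0 ∧
    (c.take k).sum < j ∧ j ≤ (c.take k).sum + c.getD k 0

/-- The matrix position `(i, j)` belongs to the seaweed `p^A(a|b)`. -/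
def seaweedPos (a b : List ℕ) (i j : ℕ) : Prop :=
  (j ≤ i ∧ sameBlock a i j) ∨ (i ≤ j ∧ sameBlock b i j)

open scoped Classical in
/-- The block of the spectrum matrix of `p^A(a|b)` on rows `R` and columns `C`:
the multiset of weights `w(P_{i,j})` over positions `(i,j)` of the seaweed with
`i ∈ R`, `j ∈ C`. -/
noncomputable def spectrumBlock (a b : List ℕ) (R C : Finset ℕ) : Multiset ℤ :=
  ((R ×ˢ C).filter fun p => seaweedPos a b p.1 p.2).val.map fun p => pathWeight a b p.1 p.2

/-- The multiset of all values of the extended spectrum matrix of `p^A(a|b)`: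
the weights `w(P_{i,j})` over all pairs `1 ≤ i, j ≤ n`. -/
noncomputable def extendedValues (a b : List ℕ) : Multiset ℤ :=
  (Finset.Icc 1 a.sum ×ˢ Finset.Icc 1 a.sum).val.map fun p => pathWeight a b p.1 p.2

/-- The spectrum of a Frobenius type-A seaweed `p^A(a|b)`: the multiset of entries of
its spectrum matrix, with one copy of `0` removed. -/
noncomputable def spectrum (a b : List ℕ) : Multiset ℤ :=
  spectrumBlock a b (Finset.Icc 1 a.sum) (Finset.Icc 1 a.sum) - {0}

/-- The extended spectrum: all entries of the extended spectrum matrix, with one copy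
of `0` removed. -/
noncomputable def extendedSpectrum (a b : List ℕ) : Multiset ℤ :=
  extendedValues a b - {0}

/-- Listing the distinct values of the multiset `S` in increasing order, the
corresponding sequence of multiplicities is log-concave. -/
def HasLogConcaveSpectrum (S : Multiset ℤ) : Prop :=
  ∀ i : ℕ, 0 < i → i + 1 < (S.toFinset.sort (· ≤ ·)).length →
    S.count ((S.toFinset.sort (· ≤ ·)).getD (i - 1) 0) *
      S.count ((S.toFinset.sort (· ≤ ·)).getD (i + 1) 0) ≤
      S.count ((S.toFinset.sort (· ≤ ·)).getD i 0) ^ 2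

/-!
The function `height k i = min (i - 1) (2k + 1 - i)` drops by exactly one along every oriented
edge of `M(2k|1 / 1|2k)`, so the weight of any walk from `v_i` to `v_j` is
`height k i - height k j`. The positions of the seaweed are `(1,1)`, `(2k+1,2k+1)` and the full
rows `2, …, 2k`; hence the spectrum is `{0}` plus all differences of a height on rows `2, …, 2k`
(values `[1,k] ∪ [1,k-1]`) and a height on all columns (values `[0,k] ∪ [0,k-1]`). Counting
the value `z` among differences of two integer intervals is an interval overlap, and the four
overlaps add up to `min (4(k+z) - 2) (4(k-z) + 2)`. This multiplicity is concave on its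
support `[1-k, k]`, hence log-concave.
-/

theorem dirEdge_or_dirEdge_of_adj {a b : List ℕ} {x y : ℕ} (h : (meander a b).Adj x y) :
    dirEdge a b x y ∨ dirEdge a b y x := by
  rcases h.ne.lt_or_gt with hlt | hlt <;> rcases h with h | h
  · exact .inr (.inl ⟨blockPair_symm h, hlt⟩)
  · exact .inl (.inr ⟨h, hlt⟩)
  · exact .inl (.inl ⟨h, hlt⟩)
  · exact .inr (.inr ⟨blockPair_symm h, hlt⟩)

theorem walkWeight_eq_sub {a b : List ℕ} (φ : ℕ → ℤ)
    (hφ : ∀ x y, dirEdge a b x y → φ x = φ y + 1) {i j : ℕ} (w : (meander a b).Walk i j) :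
    walkWeight a b w = φ i - φ j := by
  classical
  induction w with
  | nil => simp [walkWeight]
  | @cons x y _ hxy p ih =>
    rw [walkWeight] at ih ⊢
    rw [SimpleGraph.Walk.darts_cons, List.map_cons, List.sum_cons, ih]
    split_ifs with hd
    · linarith [hφ x y hd]
    · linarith [hφ y x ((dirEdge_or_dirEdge_of_adj hxy).resolve_left hd)]

theorem pathWeight_eq_sub {a b : List ℕ} (φ : ℕ → ℤ)
    (hφ : ∀ x y, dirEdge a b x y → φ x = φ y + 1) {i j : ℕ}
    (hij : (meander a b).Reachable i j) : pathWeight a b i j = φ i - φ j := by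
  obtain ⟨w⟩ := hij
  rw [pathWeight, dif_pos ⟨w.bypass, w.bypass_isPath⟩, walkWeight_eq_sub φ hφ]

theorem blockPair_pair_iff {p q i j : ℕ} :
    blockPair [p, q] i j ↔ i ≠ j ∧
      ((0 < i ∧ 0 < j ∧ i + j = p + 1) ∨ (p < i ∧ p < j ∧ i + j = 2 * p + q + 1)) := by
  constructor
  · rintro ⟨t, ht, hi, hj, hsum, hne⟩
    simp only [List.length_cons, List.length_nil] at ht
    interval_cases t <;> simp_all
  · rintro ⟨hne, ⟨hi, hj, hsum⟩ | ⟨hi, hj, hsum⟩⟩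
    · exact ⟨0, by simp, by simpa using hi, by simpa using hj, by simpa using hsum, hne⟩
    · exact ⟨1, by simp, by simpa using hi, by simpa using hj, by simpa using hsum, hne⟩

theorem sameBlock_pair_iff {p q i j : ℕ} :
    sameBlock [p, q] i j ↔
      (0 < i ∧ i ≤ p ∧ 0 < j ∧ j ≤ p) ∨ (p < i ∧ i ≤ p + q ∧ p < j ∧ j ≤ p + q) := by
  constructor
  · rintro ⟨t, ht, h⟩
    simp only [List.length_cons, List.length_nil] at ht
    interval_cases t <;> simp_all
  · rintro (h | h)
    · exact ⟨0, by simp, by simpa using h⟩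
    · exact ⟨1, by simp, by simpa using h⟩

theorem val_map_natCast_add_Icc (a b : ℕ) (c : ℤ) :
    (Finset.Icc a b).val.map (fun j : ℕ => (j : ℤ) + c) = (Finset.Icc (a + c) (b + c)).val := by
  rw [← Finset.image_val_of_injOn fun x _ y _ h => by simpa using h]
  congr 1
  ext x
  simp only [Finset.mem_image, Finset.mem_Icc]
  exact ⟨by rintro ⟨j, hj, rfl⟩; omega, fun hx => ⟨(x - c).toNat, by omega, by omega⟩⟩

theorem val_map_sub_natCast_Icc (a b : ℕ) (c : ℤ) :
    (Finset.Icc a b).val.map (fun j : ℕ => c - j) = (Finset.Icc (c - b) (c - a)).val := by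
  rw [← Finset.image_val_of_injOn fun x _ y _ h => by simpa using h]
  congr 1
  ext x
  simp only [Finset.mem_image, Finset.mem_Icc]
  exact ⟨by rintro ⟨j, hj, rfl⟩; omega, fun hx => ⟨(c - x).toNat, by omega, by omega⟩⟩

def differences (S T : Multiset ℤ) : Multiset ℤ := (S ×ˢ T).map fun p => p.1 - p.2

theorem differences_add_left (S S' T : Multiset ℤ) :
    differences (S + S') T = differences S T + differences S' T := by
  rw [differences, Multiset.add_product, Multiset.map_add]; rfl

theorem differences_add_right (S T T' : Multiset ℤ) :
    differences S (T + T') = differences S T + differences S T' := by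
  rw [differences, Multiset.product_add, Multiset.map_add]; rfl

theorem map_product_sub {α : Type*} (S T : Multiset α) (f g : α → ℤ) :
    (S ×ˢ T).map (fun p => f p.1 - g p.2) = differences (S.map f) (T.map g) := by
  induction S using Multiset.induction_on with
  | empty => simp [differences]
  | cons x S ih =>
    simp only [Multiset.cons_product, Multiset.map_add, Multiset.map_map, Multiset.map_cons, ih]
    simp [differences]

theorem count_differences_Icc (a b c d z : ℤ) :
    (differences (Finset.Icc a b).val (Finset.Icc c d).val).count z =
      (min b (d + z) + 1 - max a (c + z)).toNat := by
  rw [differences, Multiset.count_map, ← Finset.product_val, ← Finset.filter_val,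
    Finset.card_val, ← Int.card_Icc]
  refine Finset.card_nbij' Prod.fst (fun x => (x, x - z)) ?_ ?_ ?_ (fun _ _ => rfl)
  · rintro ⟨x, y⟩ hp
    simp only [Finset.coe_filter, Finset.mem_product, Finset.mem_Icc, Set.mem_ofPred_eq,
      Finset.coe_Icc, Set.mem_Icc] at hp ⊢
    omega
  · intro x hx
    simp only [Finset.coe_filter, Finset.mem_product, Finset.mem_Icc, Set.mem_ofPred_eq,
      Finset.coe_Icc, Set.mem_Icc] at hx ⊢
    omega
  · rintro ⟨x, y⟩ hp
    simp only [Finset.coe_filter, Finset.mem_product, Finset.mem_Icc, Set.mem_ofPred_eq] at hp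
    simp only [Prod.mk.injEq, true_and]
    omega

theorem sum_ite_natCast_eq {M : Type*} [AddCommMonoid M] (s : Finset ℕ) (z : ℤ) (g : ℕ → M) :
    ∑ i ∈ s, (if (i : ℤ) = z then g i else 0) = if 0 ≤ z ∧ z.toNat ∈ s then g z.toNat else 0 := by
  by_cases hz : 0 ≤ z
  · lift z to ℕ using hz
    simp only [Nat.cast_inj, Finset.sum_ite_eq', Int.toNat_natCast, Nat.cast_nonneg, true_and]
  · rw [if_neg (by tauto)]
    exact Finset.sum_eq_zero fun i _ => if_neg (by omega)

theorem getElem_sort_Icc (lo hi : ℤ) {m : ℕ} (hm : m < ((Finset.Icc lo hi).sort).length) :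
    ((Finset.Icc lo hi).sort)[m] = lo + m := by
  have hf := Finset.orderEmbOfFin_unique (Int.card_Icc lo hi)
    (f := fun i : Fin (hi + 1 - lo).toNat => lo + i)
    (fun i => by simp only [Finset.mem_Icc]; omega) (fun i j hij => by simpa using hij)
  rw [Finset.length_sort, Int.card_Icc] at hm
  exact (congrFun hf ⟨m, hm⟩).symm

theorem hasLogConcaveSpectrum_of_concave {S : Multiset ℤ} {lo hi : ℤ}
    (hS : S.toFinset = Finset.Icc lo hi)
    (hconc : ∀ z, lo < z → z < hi → S.count (z - 1) + S.count (z + 1) ≤ 2 * S.count z) :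
    HasLogConcaveSpectrum S := by
  intro i hi0 hlen
  rw [hS] at hlen ⊢
  rw [List.getD_eq_getElem _ _ (by omega), List.getD_eq_getElem _ _ (by omega),
    List.getD_eq_getElem _ _ (by omega), getElem_sort_Icc, getElem_sort_Icc, getElem_sort_Icc]
  rw [Finset.length_sort, Int.card_Icc] at hlen
  have hz := hconc (lo + i) (by omega) (by omega)
  have hprev : lo + ((i - 1 : ℕ) : ℤ) = lo + i - 1 := by omega
  have hnext : lo + ((i + 1 : ℕ) : ℤ) = lo + i + 1 := by push_cast; ring
  rw [hprev, hnext]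
  have hamgm := four_mul_le_sq_add (S.count (lo + i - 1)) (S.count (lo + i + 1))
  nlinarith

def height (k i : ℕ) : ℤ := min ((i : ℤ) - 1) (2 * k + 1 - i)

section Meander

variable {k i j : ℕ}

theorem height_eq_add_one_of_dirEdge (h : dirEdge [2 * k, 1] [1, 2 * k] i j) :
    height k i = height k j + 1 := by
  rcases h with ⟨h, hlt⟩ | ⟨h, hlt⟩ <;>
    · rw [blockPair_pair_iff] at h
      unfold height
      omega

theorem reachable_one (hi : 1 ≤ i) (hik : i ≤ 2 * k + 1) :
    (meander [2 * k, 1] [1, 2 * k]).Reachable 1 i := by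
  have top {x y : ℕ} (hx : 0 < x) (hy : 0 < y) (hxy : x + y = 2 * k + 1) :
      (meander [2 * k, 1] [1, 2 * k]).Adj x y :=
    .inl (blockPair_pair_iff.2 ⟨by omega, .inl ⟨hx, hy, hxy⟩⟩)
  have bottom {x y : ℕ} (hx : 1 < x) (hy : 1 < y) (hxy : x + y = 2 * k + 3) :
      (meander [2 * k, 1] [1, 2 * k]).Adj x y :=
    .inr (blockPair_pair_iff.2 ⟨by omega, .inr ⟨hx, hy, by omega⟩⟩)
  have odd : ∀ m ≤ k, (meander [2 * k, 1] [1, 2 * k]).Reachable 1 (2 * m + 1) := by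
    intro m
    induction m with
    | zero => exact fun _ => .refl 1
    | succ m ih =>
      intro hm
      exact ((ih (by omega)).trans (top (x := 2 * m + 1) (y := 2 * k - 2 * m) (by omega)
        (by omega) (by omega)).reachable).trans (bottom (by omega) (by omega) (by omega)).reachable
  rcases Nat.even_or_odd' i with ⟨m, rfl | rfl⟩
  · exact (odd (k - m) (by omega)).trans (top (by omega) (by omega) (by omega)).reachable
  · exact odd m (by omega)

theorem pathWeight_eq_height_sub (hi : 1 ≤ i) (hik : i ≤ 2 * k + 1) (hj : 1 ≤ j)
    (hjk : j ≤ 2 * k + 1) : pathWeight [2 * k, 1] [1, 2 * k] i j = height k i - height k j :=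
  pathWeight_eq_sub _ (fun _ _ => height_eq_add_one_of_dirEdge)
    ((reachable_one hi hik).symm.trans (reachable_one hj hjk))

theorem seaweedPos_iff (hi : 1 ≤ i) (hik : i ≤ 2 * k + 1) (hj : 1 ≤ j) (hjk : j ≤ 2 * k + 1) :
    seaweedPos [2 * k, 1] [1, 2 * k] i j ↔
      (i = 1 ∧ j = 1) ∨ (i = 2 * k + 1 ∧ j = 2 * k + 1) ∨ (2 ≤ i ∧ i ≤ 2 * k) := by
  rw [seaweedPos, sameBlock_pair_iff, sameBlock_pair_iff]
  omega

theorem val_map_height_Icc {k a b : ℕ} (hak : a ≤ k + 1) (hbk : k + 1 ≤ b) :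
    (Finset.Icc a b).val.map (height k) =
      (Finset.Icc ((a : ℤ) - 1) k).val + (Finset.Icc (2 * k + 1 - (b : ℤ)) (k - 1)).val := by
  have hsplit : Finset.Icc a b = Finset.Icc a (k + 1) ∪ Finset.Icc (k + 2) b := by
    ext; simp only [Finset.mem_union, Finset.mem_Icc]; omega
  have hdisj : Disjoint (Finset.Icc a (k + 1)).val (Finset.Icc (k + 2) b).val :=
    Finset.disjoint_val.2 <| Finset.disjoint_left.2 fun x hx hx' => by
      simp only [Finset.mem_Icc] at hx hx'; omega
  rw [hsplit, Finset.union_val, ← Multiset.add_eq_union_iff_disjoint.2 hdisj, Multiset.map_add]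
  congr 1
  · rw [Multiset.map_congr rfl (g := fun j : ℕ => (j : ℤ) + -1) fun j hj => by
      simp only [Finset.mem_val, Finset.mem_Icc] at hj; unfold height; omega,
      val_map_natCast_add_Icc]
    congr 2
    omega
  · rw [Multiset.map_congr rfl (g := fun j : ℕ => (2 * k + 1 : ℤ) - j) fun j hj => by
      simp only [Finset.mem_val, Finset.mem_Icc] at hj; unfold height; omega,
      val_map_sub_natCast_Icc]
    congr 2
    omega

end Meander

theorem count_sum_replicate (k : ℕ) (z : ℤ) :
    (∑ i ∈ Finset.Icc 1 k,
        (Multiset.replicate (4 * i - 2) ((i : ℤ) - k) +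
          Multiset.replicate (4 * i - 2) ((k : ℤ) - i + 1))).count z =
      (min (4 * (k + z) - 2) (4 * (k - z) + 2)).toNat := by
  simp only [Multiset.count_sum', Multiset.count_add, Multiset.count_replicate]
  have hleft (i : ℕ) : ((i : ℤ) - k = z) = ((i : ℤ) = z + k) := propext (by omega)
  have hright (i : ℕ) : ((k : ℤ) - i + 1 = z) = ((i : ℤ) = k + 1 - z) := propext (by omega)
  simp only [hleft, hright, Finset.sum_add_distrib, sum_ite_natCast_eq, Finset.mem_Icc]
  split_ifs <;> omega

section Spectrum

variable {k : ℕ}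

theorem spectrumBlock_eq (hk : 1 ≤ k) :
    spectrumBlock [2 * k, 1] [1, 2 * k] (Finset.Icc 1 (2 * k + 1)) (Finset.Icc 1 (2 * k + 1)) =
      0 ::ₘ 0 ::ₘ differences ((Finset.Icc 2 (2 * k)).val.map (height k))
        ((Finset.Icc 1 (2 * k + 1)).val.map (height k)) := by
  classical
  have hpos : {p ∈ Finset.Icc 1 (2 * k + 1) ×ˢ Finset.Icc 1 (2 * k + 1) |
      seaweedPos [2 * k, 1] [1, 2 * k] p.1 p.2} =
      insert (1, 1) (insert (2 * k + 1, 2 * k + 1)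
        (Finset.Icc 2 (2 * k) ×ˢ Finset.Icc 1 (2 * k + 1))) := by
    ext ⟨i, j⟩
    simp only [Finset.mem_filter, Finset.mem_product, Finset.mem_Icc, Finset.mem_insert,
      Prod.mk.injEq]
    constructor
    · rintro ⟨⟨⟨hi, hik⟩, hj, hjk⟩, h⟩
      rw [seaweedPos_iff hi hik hj hjk] at h
      omega
    · intro h
      have hr : (1 ≤ i ∧ i ≤ 2 * k + 1) ∧ 1 ≤ j ∧ j ≤ 2 * k + 1 := by omega
      exact ⟨hr, (seaweedPos_iff hr.1.1 hr.1.2 hr.2.1 hr.2.2).2 (by omega)⟩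
  rw [spectrumBlock, hpos, Finset.insert_val_of_notMem
      (by simp only [Finset.mem_insert, Finset.mem_product, Finset.mem_Icc, Prod.mk.injEq]; omega),
    Finset.insert_val_of_notMem (by simp), Multiset.map_cons, Multiset.map_cons,
    pathWeight_eq_height_sub le_rfl (by omega) le_rfl (by omega), sub_self,
    pathWeight_eq_height_sub (by omega) le_rfl (by omega) le_rfl, sub_self, Finset.product_val,
    Multiset.map_congr rfl (g := fun p => height k p.1 - height k p.2), map_product_sub]
  rintro ⟨i, j⟩ hij
  simp only [Multiset.mem_product, Finset.mem_val, Finset.mem_Icc] at hij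
  exact pathWeight_eq_height_sub (by omega) (by omega) hij.2.1 hij.2.2

theorem count_spectrum (hk : 1 ≤ k) (z : ℤ) :
    (spectrum [2 * k, 1] [1, 2 * k]).count z = (min (4 * (k + z) - 2) (4 * (k - z) + 2)).toNat := by
  have hn : [2 * k, 1].sum = 2 * k + 1 := by simp
  rw [spectrum, hn, spectrumBlock_eq hk, val_map_height_Icc (by omega) (by omega),
    val_map_height_Icc (by omega) (by omega), differences_add_left, differences_add_right,
    differences_add_right, Multiset.count_sub, Multiset.count_cons, Multiset.count_cons,
    Multiset.count_singleton, Multiset.count_add, Multiset.count_add, Multiset.count_add,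
    count_differences_Icc, count_differences_Icc, count_differences_Icc, count_differences_Icc]
  split_ifs <;> omega

theorem toFinset_spectrum (hk : 1 ≤ k) :
    (spectrum [2 * k, 1] [1, 2 * k]).toFinset = Finset.Icc (1 - (k : ℤ)) k := by
  ext z
  rw [Multiset.mem_toFinset, ← Multiset.count_pos, count_spectrum hk, Finset.mem_Icc]
  omega

end Spectrum

/-- For `k ≥ 1`, the spectrum of the Frobenius type-A seaweed `p^A(2k|1 / 1|2k)` is
`⋃_{i=1}^{k} {(-k+i)^{4i-2}, (k-i+1)^{4i-2}}`, and the seaweed has the log-concave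
spectrum property. -/
theorem statement14 (k : ℕ) (hk : 1 ≤ k) :
    spectrum [2 * k, 1] [1, 2 * k]
        = ∑ i ∈ Finset.Icc 1 k,
            (Multiset.replicate (4 * i - 2) ((i : ℤ) - k) +
              Multiset.replicate (4 * i - 2) ((k : ℤ) - i + 1)) ∧
    HasLogConcaveSpectrum (spectrum [2 * k, 1] [1, 2 * k]) := by
  refine ⟨Multiset.ext.2 fun z => by rw [count_spectrum hk, count_sum_replicate], ?_⟩
  refine hasLogConcaveSpectrum_of_concave (toFinset_spectrum hk) fun z _ _ => ?_
  rw [count_spectrum hk, count_spectrum hk, count_spectrum hk]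
  omega

end Seaweed
end

section
/- Let a_1,…,a_m and b_1,…,b_t be positive integers such that g = p^A(a_1|…|a_m|1 / b_1|…|b_t) is a Frobenius type-A seaweed (its meander is a single path) with spectrum S, and let r ≥ 1 be an integer. Then: (1) g' = p^A(a_1|…|a_m|2|…|2 / b_1|…|b_t|2|…|2|1), with r trailing 2's in the top composition and r−1 trailing 2's followed by a 1 in the bottom composition, is a Frobenius type-A seaweed with spectrum S ∪ {0 with multiplicity 2r−1, 1 with multiplicity 2r−1}; and (2) g'' = p^A(a_1|…|a_m|2|…|2|1 / b_1|…|b_t|2|…|2), with r trailing 2's followed by a 1 in the top composition and r trailing 2's in the bottom composition, is a Frobenius type-A seaweed with spectrum S ∪ {0 with multiplicity 2r, 1 with multiplicity 2r}. -/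
/-!
Each step appends one vertex `n + 1` to the meander, adjacent only to `n`: a trailing `2` on
one side creates the edge `n — n + 1`, the `1` on the other side creates no edge. Hence the
meander remains a single path, the weights of old paths do not change, and the seaweed gains
exactly two positions: the diagonal `(n + 1, n + 1)`, of weight `0`, and the position whose
path is the new edge traversed along its orientation, of weight `1`. A `2` at the bottom is the
mirror image of a `2` on top: exchanging the two compositions transposes the spectrum matrix.
-/

namespace Seaweed

open SimpleGraph

variable {a b c d : List ℕ} {i j : ℕ}

lemma exists_block_append {x : ℕ} {P : ℕ → ℕ → Prop} :
    (∃ k, k < (c ++ [x]).length ∧ P ((c ++ [x]).take k).sum ((c ++ [x]).getD k 0)) ↔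
      (∃ k, k < c.length ∧ P (c.take k).sum (c.getD k 0)) ∨ P c.sum x := by
  constructor
  · rintro ⟨k, hk, h⟩
    rw [List.length_append, List.length_singleton] at hk
    rcases Nat.lt_succ_iff_lt_or_eq.1 hk with hk | rfl
    · rw [List.take_append_of_le_length hk.le, List.getD_append _ _ _ _ hk] at h
      exact Or.inl ⟨k, hk, h⟩
    · simpa using Or.inr h
  · rintro (⟨k, hk, h⟩ | h)
    · refine ⟨k, by simp; omega, ?_⟩
      rwa [List.take_append_of_le_length hk.le, List.getD_append _ _ _ _ hk]
    · exact ⟨c.length, by simp, by simpa using h⟩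

lemma blockPair_append {x : ℕ} :
    blockPair (c ++ [x]) i j ↔ blockPair c i j ∨
      (c.sum < i ∧ c.sum < j ∧ i + j = 2 * c.sum + x + 1 ∧ i ≠ j) :=
  exists_block_append (P := fun s l => s < i ∧ s < j ∧ i + j = 2 * s + l + 1 ∧ i ≠ j)

lemma sameBlock_append {x : ℕ} :
    sameBlock (c ++ [x]) i j ↔ sameBlock c i j ∨
      (c.sum < i ∧ i ≤ c.sum + x ∧ c.sum < j ∧ j ≤ c.sum + x) :=
  exists_block_append (P := fun s l => s < i ∧ i ≤ s + l ∧ s < j ∧ j ≤ s + l)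

lemma blockPair_append_one :
    blockPair (c ++ [1]) i j ↔ blockPair c i j := by
  rw [blockPair_append, or_iff_left (by omega)]

lemma blockPair_append_two :
    blockPair (c ++ [2]) i j ↔ blockPair c i j ∨ (edge (c.sum + 1) (c.sum + 2)).Adj i j := by
  rw [blockPair_append, edge_adj]
  exact or_congr_right (by omega)

lemma sum_take_add_getD_le {k : ℕ} (hk : k < c.length) :
    (c.take k).sum + c.getD k 0 ≤ c.sum := by
  rw [List.getD_eq_getElem c 0 hk, ← List.sum_take_succ c k hk]
  exact (List.take_sublist _ _).sum_le_sum fun _ _ => Nat.zero_le _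

lemma blockPair_bounds (h : blockPair c i j) :
    1 ≤ i ∧ i ≤ c.sum ∧ 1 ≤ j ∧ j ≤ c.sum := by
  obtain ⟨k, hk, hi, hj, hsum, -⟩ := h
  have := sum_take_add_getD_le hk
  omega

lemma sameBlock_bounds (h : sameBlock c i j) :
    1 ≤ i ∧ i ≤ c.sum ∧ 1 ≤ j ∧ j ≤ c.sum := by
  obtain ⟨k, hk, hi, hi', hj, hj'⟩ := h
  have := sum_take_add_getD_le hk
  omega

lemma sameBlock_comm : sameBlock c i j ↔ sameBlock c j i := by
  unfold sameBlock
  constructor <;>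
  · rintro ⟨k, hk, hi, hi', hj, hj'⟩
    exact ⟨k, hk, hj, hj', hi, hi'⟩

@[simp]
lemma meander_adj :
    (meander a b).Adj i j ↔ blockPair a i j ∨ blockPair b i j := Iff.rfl

lemma meander_comm (a b : List ℕ) : meander b a = meander a b := by
  ext i j
  simp only [meander_adj, or_comm]

lemma dirEdge_comm {x y : ℕ} : dirEdge b a x y ↔ dirEdge a b y x := by
  unfold dirEdge
  have := @blockPair_symm a x y
  have := @blockPair_symm a y x
  have := @blockPair_symm b x y
  have := @blockPair_symm b y x
  tauto

lemma dirEdge.adj {x y : ℕ} (h : dirEdge a b x y) : (meander a b).Adj x y :=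
  h.imp And.left And.left

open scoped Classical in
lemma walkWeight_mapLe {a' b' : List ℕ} (hle : meander a b ≤ meander a' b')
    (hdir : ∀ x y, (meander a b).Adj x y → (dirEdge a' b' x y ↔ dirEdge a b x y))
    (p : (meander a b).Walk i j) :
    walkWeight a' b' (p.mapLe hle) = walkWeight a b p := by
  unfold walkWeight
  rw [Walk.mapLe, Walk.darts_map, List.map_map]
  congr 1
  refine List.map_congr_left fun d _ => ?_
  simp [hdir _ _ d.adj]

open scoped Classical in
lemma walkWeight_reverse_mapLe_comm (p : (meander a b).Walk i j) :
    walkWeight b a (p.reverse.mapLe (meander_comm a b).ge) = walkWeight a b p := by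
  unfold walkWeight
  rw [Walk.mapLe, Walk.darts_map, Walk.darts_reverse]
  simp [List.map_reverse, List.sum_reverse, dirEdge_comm, Function.comp_def, Hom.mapDart_apply]

lemma pathWeight_eq_of_isPath (hacyc : (meander a b).IsAcyclic)
    {p : (meander a b).Walk i j} (hp : p.IsPath) : pathWeight a b i j = walkWeight a b p := by
  have h : ∃ q : (meander a b).Walk i j, q.IsPath := ⟨p, hp⟩
  have := hacyc.subsingleton_path i j
  rw [pathWeight, dif_pos h]
  exact congrArg (fun q : (meander a b).Path i j => walkWeight a b q.val)
    (Subsingleton.elim ⟨_, h.choose_spec⟩ ⟨p, hp⟩)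

lemma pathWeight_self (hacyc : (meander a b).IsAcyclic) (i : ℕ) :
    pathWeight a b i i = 0 :=
  pathWeight_eq_of_isPath hacyc Walk.IsPath.nil

lemma pathWeight_eq_one_of_dirEdge (hacyc : (meander a b).IsAcyclic) 
    (h : dirEdge a b i j) : pathWeight a b i j = 1 := by
  classical
  have hp : (Walk.cons h.adj Walk.nil).IsPath := by simpa using h.adj.ne
  simp [pathWeight_eq_of_isPath hacyc hp, walkWeight, h]

lemma pathWeight_eq_of_le {a' b' : List ℕ} (hle : meander a b ≤ meander a' b')
    (hacyc : (meander a b).IsAcyclic) (hacyc' : (meander a' b').IsAcyclic)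
    (hdir : ∀ x y, (meander a b).Adj x y → (dirEdge a' b' x y ↔ dirEdge a b x y))
    (hij : (meander a b).Reachable i j) :
    pathWeight a' b' i j = pathWeight a b i j := by
  classical
  obtain ⟨p, hp⟩ := hij.some.toPath
  rw [pathWeight_eq_of_isPath hacyc hp, pathWeight_eq_of_isPath hacyc' (hp.mapLe hle),
    walkWeight_mapLe hle hdir]

lemma pathWeight_comm (hacyc : (meander a b).IsAcyclic) (i j : ℕ) :
    pathWeight b a i j = pathWeight a b j i := by
  classical
  by_cases hji : (meander a b).Reachable j i
  · obtain ⟨p, hp⟩ := hji.some.toPath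
    rw [pathWeight_eq_of_isPath hacyc hp, ← walkWeight_reverse_mapLe_comm,
      pathWeight_eq_of_isPath (meander_comm a b ▸ hacyc) (hp.reverse.mapLe _)]
  · have hij : ¬(meander b a).Reachable i j := fun ⟨p⟩ =>
      hji ⟨p.reverse.mapLe (meander_comm a b).le⟩
    rw [pathWeight, pathWeight, dif_neg fun ⟨p, _⟩ => hij ⟨p⟩,
      dif_neg fun ⟨p, _⟩ => hji ⟨p⟩]

lemma seaweedPos_comm : seaweedPos b a i j ↔ seaweedPos a b j i := by
  unfold seaweedPos
  rw [@sameBlock_comm a, @sameBlock_comm b]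
  tauto

lemma spectrumBlock_comm (hacyc : (meander a b).IsAcyclic) (R : Finset ℕ) :
    spectrumBlock b a R R = spectrumBlock a b R R := by
  classical
  have hswap : (R ×ˢ R).filter (fun p => seaweedPos b a p.1 p.2) =
      ((R ×ˢ R).filter fun p => seaweedPos a b p.1 p.2).map
        (Equiv.prodComm ℕ ℕ).toEmbedding := by
    ext ⟨i, j⟩
    simp [seaweedPos_comm, and_comm]
  unfold spectrumBlock
  rw [hswap, Finset.map_val, Multiset.map_map]
  exact Multiset.map_congr rfl fun p _ => pathWeight_comm hacyc p.2 p.1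

lemma IsSinglePath.symm (hab : a.sum = b.sum) (h : IsSinglePath a b) :
    IsSinglePath b a := by
  obtain ⟨hacyc, hconn, hsimple⟩ := h
  refine ⟨meander_comm a b ▸ hacyc, fun i j hi hj => ?_, fun i j h => hsimple i j h.symm⟩
  rw [← hab] at hi hj
  exact (hconn i j hi hj).mono (meander_comm a b).ge

lemma spectrum_comm (hab : a.sum = b.sum) (hacyc : (meander a b).IsAcyclic) :
    spectrum b a = spectrum a b := by
  rw [spectrum, spectrum, spectrumBlock_comm hacyc, hab]

lemma sub_singleton_cons_cons {α : Type*} [DecidableEq α] {M : Multiset α} {x y : α}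
    (hx : x ∈ M) (hxy : x ≠ y) : (y ::ₘ x ::ₘ M) - {x} = M - {x} + {x, y} := by
  rw [Multiset.sub_singleton, Multiset.sub_singleton, Multiset.erase_cons_tail _ hxy.symm,
    Multiset.erase_cons_head]
  nth_rewrite 1 [← Multiset.cons_erase hx]
  rw [Multiset.insert_eq_cons, Multiset.add_cons, Multiset.add_comm, Multiset.singleton_add,
    Multiset.cons_swap]

lemma le_of_meander_adj {n x y : ℕ} (ha : a.sum ≤ n) (hb : b.sum ≤ n)
    (h : (meander a b).Adj x y) : x ≤ n ∧ y ≤ n := by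
  rcases h with h | h
  · have := blockPair_bounds h; omega
  · have := blockPair_bounds h; omega

lemma not_reachable_succ_of_sum_le {n : ℕ} (ha : a.sum ≤ n) (hb : b.sum ≤ n) :
    ¬(meander a b).Reachable n (n + 1) := by
  rintro ⟨p⟩
  obtain ⟨w, h, -, -⟩ := Walk.exists_eq_cons_of_ne (by omega) p.reverse
  have := le_of_meander_adj ha hb h
  omega

lemma meander_append_two_append_one (hcd : c.sum + 1 = d.sum) :
    meander (c ++ [2]) (d ++ [1]) = meander (c ++ [1]) d ⊔ edge d.sum (d.sum + 1) := by
  ext i j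
  simp only [meander_adj, sup_adj, blockPair_append_two, blockPair_append_one, ← hcd]
  tauto

lemma IsSinglePath.append_two_append_one (hcd : c.sum + 1 = d.sum)
    (h : IsSinglePath (c ++ [1]) d) : IsSinglePath (c ++ [2]) (d ++ [1]) := by
  obtain ⟨hacyc, hconn, hsimple⟩ := h
  have hsum : (c ++ [1]).sum = d.sum := by simpa using hcd
  refine ⟨?_, ?_, ?_⟩
  · rw [meander_append_two_append_one hcd]
    exact hacyc.sup_edge_of_not_reachable (not_reachable_succ_of_sum_le hsum.le le_rfl)
  · have hreach : ∀ i, 1 ≤ i → i ≤ d.sum + 1 →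
        (meander (c ++ [2]) (d ++ [1])).Reachable i d.sum := by
      intro i hi hi'
      rw [meander_append_two_append_one hcd]
      rcases hi'.lt_or_eq with hi' | rfl
      · exact (hconn i d.sum (by simp; omega) (by simp; omega)).mono le_sup_left
      · exact (Adj.reachable (by simp [edge_adj])).mono le_sup_right
    intro i j hi hj
    simp only [List.sum_append, List.sum_singleton, Finset.mem_Icc] at hi hj
    exact (hreach i hi.1 (by omega)).trans (hreach j hj.1 (by omega)).symm
  · rintro i j ⟨hc, hd⟩
    rw [blockPair_append_one] at hd
    have := blockPair_bounds hd
    rcases blockPair_append_two.1 hc with hc | hc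
    · exact hsimple i j ⟨blockPair_append_one.2 hc, hd⟩
    · rw [edge_adj] at hc
      omega

open scoped Classical in
lemma filter_seaweedPos_append_two_append_one (hcd : c.sum + 1 = d.sum) :
    (Finset.Icc 1 (d.sum + 1) ×ˢ Finset.Icc 1 (d.sum + 1)).filter
        (fun p => seaweedPos (c ++ [2]) (d ++ [1]) p.1 p.2) =
      insert (d.sum + 1, d.sum) (insert (d.sum + 1, d.sum + 1)
        ((Finset.Icc 1 d.sum ×ˢ Finset.Icc 1 d.sum).filter
          (fun p => seaweedPos (c ++ [1]) d p.1 p.2))) := by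
  ext ⟨i, j⟩
  have hc := fun h : sameBlock c i j => sameBlock_bounds h
  have hd := fun h : sameBlock d i j => sameBlock_bounds h
  simp only [Finset.mem_filter, Finset.mem_insert, Finset.mem_product, Finset.mem_Icc,
    Prod.mk.injEq, seaweedPos, sameBlock_append]
  by_cases hc' : sameBlock c i j <;> by_cases hd' : sameBlock d i j <;>
    simp only [hc', hd', true_or, false_or, and_true, and_false, or_false,
      true_implies, false_implies] at hc hd ⊢ <;> omega

lemma spectrumBlock_append_two_append_one (hcd : c.sum + 1 = d.sum)
    (h : IsSinglePath (c ++ [1]) d) :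
    spectrumBlock (c ++ [2]) (d ++ [1]) (Finset.Icc 1 (d.sum + 1)) (Finset.Icc 1 (d.sum + 1)) =
      1 ::ₘ 0 ::ₘ spectrumBlock (c ++ [1]) d (Finset.Icc 1 d.sum) (Finset.Icc 1 d.sum) := by
  have hsum : (c ++ [1]).sum = d.sum := by simpa using hcd
  have hacyc' := (h.append_two_append_one hcd).1
  have hle : meander (c ++ [1]) d ≤ meander (c ++ [2]) (d ++ [1]) :=
    meander_append_two_append_one hcd ▸ le_sup_left
  have hdir : ∀ x y, (meander (c ++ [1]) d).Adj x y →
      (dirEdge (c ++ [2]) (d ++ [1]) x y ↔ dirEdge (c ++ [1]) d x y) := by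
    intro x y hxy
    have := le_of_meander_adj hsum.le le_rfl hxy
    have hnew : ¬(edge (c.sum + 1) (c.sum + 2)).Adj x y := by rw [edge_adj]; omega
    simp only [dirEdge, blockPair_append_two, blockPair_append_one, hnew, or_false]
  have hnew : dirEdge (c ++ [2]) (d ++ [1]) (d.sum + 1) d.sum :=
    Or.inl ⟨blockPair_append_two.2 (Or.inr (by rw [edge_adj]; omega)), by omega⟩
  unfold spectrumBlock
  rw [filter_seaweedPos_append_two_append_one hcd, Finset.insert_val_of_notMem (by simp),
    Finset.insert_val_of_notMem (by simp), Multiset.map_cons, Multiset.map_cons,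
    pathWeight_eq_one_of_dirEdge hacyc' hnew, pathWeight_self hacyc']
  refine congrArg _ (congrArg _ (Multiset.map_congr rfl fun p hp => ?_))
  simp only [Finset.mem_val, Finset.mem_filter, Finset.mem_product, Finset.mem_Icc] at hp
  exact pathWeight_eq_of_le hle h.1 hacyc' hdir
    (h.2.1 _ _ (by simp [hsum]; omega) (by simp [hsum]; omega))

lemma spectrum_append_two_append_one (hcd : c.sum + 1 = d.sum)
    (h : IsSinglePath (c ++ [1]) d) :
    spectrum (c ++ [2]) (d ++ [1]) = spectrum (c ++ [1]) d + {0, 1} := by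
  classical
  have hsum : (c ++ [1]).sum = d.sum := by simpa using hcd
  have hsum' : (c ++ [2]).sum = d.sum + 1 := by rw [List.sum_append, List.sum_singleton]; omega
  have hdiag : (0 : ℤ) ∈ spectrumBlock (c ++ [1]) d (Finset.Icc 1 d.sum) (Finset.Icc 1 d.sum) :=
    Multiset.mem_map.2 ⟨(d.sum, d.sum), Finset.mem_filter.2 ⟨by simp; omega,
      Or.inl ⟨le_rfl, sameBlock_append.2 (Or.inr (by omega))⟩⟩, pathWeight_self h.1 _⟩
  rw [spectrum, spectrum, hsum, hsum', spectrumBlock_append_two_append_one hcd h,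
    sub_singleton_cons_cons hdiag zero_ne_one]

lemma IsSinglePath.append_one_append_two (hcd : c.sum + 1 = d.sum)
    (h : IsSinglePath d (c ++ [1])) : IsSinglePath (d ++ [1]) (c ++ [2]) :=
  ((h.symm (by simpa using hcd.symm)).append_two_append_one hcd).symm (by simp; omega)

lemma spectrum_append_one_append_two (hcd : c.sum + 1 = d.sum)
    (h : IsSinglePath d (c ++ [1])) :
    spectrum (d ++ [1]) (c ++ [2]) = spectrum d (c ++ [1]) + {0, 1} := by
  have h' := h.symm (by simpa using hcd.symm)
  rw [spectrum_comm (by simp; omega) (h'.append_two_append_one hcd).1,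
    spectrum_append_two_append_one hcd h', spectrum_comm (by simpa using hcd) h'.1]

lemma add_replicate_add_pair {α : Type*} (S : Multiset α) (x y : α) (k : ℕ) :
    S + Multiset.replicate k x + Multiset.replicate k y + {x, y} =
      S + Multiset.replicate (k + 1) x + Multiset.replicate (k + 1) y := by
  simp only [Multiset.replicate_succ, Multiset.insert_eq_cons, ← Multiset.singleton_add]
  abel

lemma isSinglePath_and_spectrum_append_replicate_two
    (hsum : (a ++ [1]).sum = b.sum) (hpath : IsSinglePath (a ++ [1]) b) (r : ℕ) :
    IsSinglePath (a ++ List.replicate r 2 ++ [1]) (b ++ List.replicate r 2) ∧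
      spectrum (a ++ List.replicate r 2 ++ [1]) (b ++ List.replicate r 2) =
        spectrum (a ++ [1]) b + Multiset.replicate (2 * r) (0 : ℤ) +
          Multiset.replicate (2 * r) (1 : ℤ) := by
  induction r with
  | zero => simpa using hpath
  | succ r ih =>
    obtain ⟨hpath_r, hspec_r⟩ := ih
    have hcd : (a ++ List.replicate r 2).sum + 1 = (b ++ List.replicate r 2).sum := by
      simp only [List.sum_append, List.sum_singleton] at hsum ⊢
      omega
    have hstep := hpath_r.append_two_append_one hcd
    have hcd' : (b ++ List.replicate r 2).sum + 1 = (a ++ List.replicate r 2 ++ [2]).sum := by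
      simp only [List.sum_append, List.sum_singleton] at hcd ⊢
      omega
    rw [List.replicate_succ', ← List.append_assoc, ← List.append_assoc]
    refine ⟨hstep.append_one_append_two hcd', ?_⟩
    rw [spectrum_append_one_append_two hcd' hstep, spectrum_append_two_append_one hcd hpath_r,
      hspec_r, add_replicate_add_pair, add_replicate_add_pair, mul_add_one]

theorem statement17_general (a b : List ℕ) (r : ℕ) (hr : 1 ≤ r)
    (hsum : (a ++ [1]).sum = b.sum)
    (hpath : IsSinglePath (a ++ [1]) b) :
    (IsSinglePath (a ++ List.replicate r 2) (b ++ List.replicate (r - 1) 2 ++ [1]) ∧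
      spectrum (a ++ List.replicate r 2) (b ++ List.replicate (r - 1) 2 ++ [1])
        = spectrum (a ++ [1]) b + Multiset.replicate (2 * r - 1) (0 : ℤ) +
            Multiset.replicate (2 * r - 1) (1 : ℤ)) ∧
    (IsSinglePath (a ++ List.replicate r 2 ++ [1]) (b ++ List.replicate r 2) ∧
      spectrum (a ++ List.replicate r 2 ++ [1]) (b ++ List.replicate r 2)
        = spectrum (a ++ [1]) b + Multiset.replicate (2 * r) (0 : ℤ) +
            Multiset.replicate (2 * r) (1 : ℤ)) := by
  refine ⟨?_, isSinglePath_and_spectrum_append_replicate_two hsum hpath r⟩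
  obtain ⟨s, rfl⟩ := Nat.exists_eq_add_of_le' hr
  obtain ⟨hpath_s, hspec_s⟩ := isSinglePath_and_spectrum_append_replicate_two hsum hpath s
  have hcd : (a ++ List.replicate s 2).sum + 1 = (b ++ List.replicate s 2).sum := by
    simp only [List.sum_append, List.sum_singleton] at hsum ⊢
    omega
  rw [List.replicate_succ', ← List.append_assoc, Nat.add_sub_cancel,
    show 2 * (s + 1) - 1 = 2 * s + 1 by omega]
  exact ⟨hpath_s.append_two_append_one hcd, by
    rw [spectrum_append_two_append_one hcd hpath_s, hspec_s, add_replicate_add_pair]⟩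

/-- If `g = p^A(a_1|…|a_m|1 / b_1|…|b_t)` is a Frobenius type-A seaweed with spectrum
`S` and `r ≥ 1`, then appending `r` trailing `2`'s as indicated yields Frobenius
type-A seaweeds with spectra `S ∪ {0^{2r-1}, 1^{2r-1}}` and `S ∪ {0^{2r}, 1^{2r}}`
respectively. -/
theorem statement17 (a b : List ℕ) (r : ℕ) (hr : 1 ≤ r)
    (ha : ∀ x ∈ a, 0 < x) (hb : ∀ x ∈ b, 0 < x)
    (hsum : (a ++ [1]).sum = b.sum)
    (hpath : IsSinglePath (a ++ [1]) b) :
    (IsSinglePath (a ++ List.replicate r 2) (b ++ List.replicate (r - 1) 2 ++ [1]) ∧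
      spectrum (a ++ List.replicate r 2) (b ++ List.replicate (r - 1) 2 ++ [1])
        = spectrum (a ++ [1]) b + Multiset.replicate (2 * r - 1) (0 : ℤ) +
            Multiset.replicate (2 * r - 1) (1 : ℤ)) ∧
    (IsSinglePath (a ++ List.replicate r 2 ++ [1]) (b ++ List.replicate r 2) ∧
      spectrum (a ++ List.replicate r 2 ++ [1]) (b ++ List.replicate r 2)
        = spectrum (a ++ [1]) b + Multiset.replicate (2 * r) (0 : ℤ) +
            Multiset.replicate (2 * r) (1 : ℤ)) :=
  statement17_general a b r hr hsum hpath

end Seaweed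
end
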